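/- arXiv:1405.5379 — 15 statements merged into one kernel-verified Lean document; each statement's English description precedes it below -/
import Mathlib

section
/- Let y : ℕ → ℝ be a sequence with y_n > 0 for all n. Then y satisfies the Somos-4 Y-system y_{n+4} · y_n = (1 + y_{n+3})(1 + y_{n+1}) / (1 + y_{n+2}^{-1})^2 for all n ∈ ℕ if and only if there exist constants β > 0 and 𝔮 > 0 such that y_{n+2} · y_n = β · 𝔮^n · (1 + y_{n+1}) / y_{n+1}^2 for all n ∈ ℕ (a q-difference analogue of the first Painlevé equation). -/
/-!
The invariant `f n = y (n+2) y n y (n+1)^2 / (1 + y (n+1))` is chosen so that the q-Painlevé I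
equation says exactly `f n = β 𝔮^n`. Clearing denominators, the Y-system at `n` becomes
`f (n+1)^2 = f n f (n+2)`, i.e. `f` has constant ratio `f (n+1) / f n`; for a nonvanishing
sequence this means `f` is geometric.
-/

theorem eq_mul_pow_of_sq_succ_eq_mul {K : Type*} [Field K] {a : ℕ → K} (ha : ∀ n, a n ≠ 0)
    (h : ∀ n, a (n + 1) ^ 2 = a n * a (n + 2)) (n : ℕ) : a n = a 0 * (a 1 / a 0) ^ n := by
  induction n using Nat.strong_induction_on with
  | _ n ih =>
    match n, ih with
    | 0, _ => simp
    | 1, _ => field_simp [ha 0]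
    | k + 2, ih =>
      apply mul_left_cancel₀ (ha k)
      rw [← h k, ih (k + 1) (by omega), ih k (by omega)]
      ring

section qPainleveI

variable {K : Type*} [Field K] {y : ℕ → K}

def qPainleveIInvariant (y : ℕ → K) (n : ℕ) : K :=
  y (n + 2) * y n * y (n + 1) ^ 2 / (1 + y (n + 1))

theorem qPainleveI_iff_invariant_eq (hy : ∀ n, y n ≠ 0) (hy1 : ∀ n, 1 + y n ≠ 0) (n : ℕ) (c : K) :
    y (n + 2) * y n = c * (1 + y (n + 1)) / y (n + 1) ^ 2 ↔ qPainleveIInvariant y n = c := by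
  rw [qPainleveIInvariant, eq_div_iff (pow_ne_zero 2 (hy (n + 1))), div_eq_iff (hy1 (n + 1))]

theorem Ysystem_iff_invariant_sq_eq_mul (hy : ∀ n, y n ≠ 0) (hy1 : ∀ n, 1 + y n ≠ 0) (n : ℕ) :
    y (n + 4) * y n = (1 + y (n + 3)) * (1 + y (n + 1)) / (1 + (y (n + 2))⁻¹) ^ 2 ↔
      qPainleveIInvariant y (n + 1) ^ 2 =
        qPainleveIInvariant y n * qPainleveIInvariant y (n + 2) := by
  have := hy (n + 1); have := hy (n + 2); have := hy (n + 3)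
  have := hy1 (n + 1); have := hy1 (n + 2); have := hy1 (n + 3)
  have hinv : 1 + (y (n + 2))⁻¹ = (1 + y (n + 2)) / y (n + 2) := by
    field_simp; ring
  simp only [qPainleveIInvariant, hinv]
  field_simp
  constructor <;> intro h <;> linear_combination -h

end qPainleveI

theorem qPainleveIInvariant_pos {y : ℕ → ℝ} (hy : ∀ n, 0 < y n) (n : ℕ) :
    0 < qPainleveIInvariant y n := by
  have := hy n; have := hy (n + 1); have := hy (n + 2)
  unfold qPainleveIInvariant
  positivity

/-- The Somos-4 Y-system is equivalent to a q-Painlevé I equation: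
a positive sequence satisfies the fourth-order Y-system iff it satisfies the
second-order non-autonomous recurrence `y_{n+2} y_n = β 𝔮^n (1+y_{n+1})/y_{n+1}^2`
for some positive constants `β`, `𝔮`. -/
theorem somos4_Ysystem_iff_qPainleveI (y : ℕ → ℝ) (hy : ∀ n, 0 < y n) :
    (∀ n : ℕ, y (n + 4) * y n =
      (1 + y (n + 3)) * (1 + y (n + 1)) / (1 + (y (n + 2))⁻¹) ^ 2) ↔
    (∃ β 𝔮 : ℝ, 0 < β ∧ 0 < 𝔮 ∧
      ∀ n : ℕ, y (n + 2) * y n = β * 𝔮 ^ n * (1 + y (n + 1)) / (y (n + 1)) ^ 2) := by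
  have hy0 : ∀ n, y n ≠ 0 := fun n => (hy n).ne'
  have hy1 : ∀ n, 1 + y n ≠ 0 := fun n => by linarith [hy n]
  have hf := qPainleveIInvariant_pos hy
  simp only [Ysystem_iff_invariant_sq_eq_mul hy0 hy1, qPainleveI_iff_invariant_eq hy0 hy1]
  constructor
  · intro hgeo
    exact ⟨_, _, hf 0, div_pos (hf 1) (hf 0),
      eq_mul_pow_of_sq_succ_eq_mul (fun n => (hf n).ne') hgeo⟩
  · rintro ⟨β, 𝔮, -, -, hP⟩ n
    rw [hP, hP, hP]
    ring
end

section
/- Let y : ℕ → ℝ be a sequence with y_n > 0 for all n, and define Z_n := y_{n+2} · y_{n+1}^2 · y_n / (1 + y_{n+1}) for all n. Then y satisfies the Somos-4 Y-system y_{n+4} · y_n = (1 + y_{n+3})(1 + y_{n+1}) / (1 + y_{n+2}^{-1})^2 for all n ∈ ℕ if and only if Z satisfies Z_n · Z_{n+2} = Z_{n+1}^2 for all n ∈ ℕ. -/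
section Field

variable {K : Type*} [Field K]

/-- Writing `(a, b, c, d, e) = (y₀, …, y₄)`, the ratio `Z₀ Z₂ / Z₁²` equals the ratio of the two
sides of the Y-system relation. -/
lemma somos4Z_mul_eq_sq_mul (a b c d e : K) (hb : b ≠ 0) (hc : c ≠ 0) (hd : d ≠ 0)
    (hb₁ : 1 + b ≠ 0) (hc₁ : 1 + c ≠ 0) (hd₁ : 1 + d ≠ 0) :
    c * b ^ 2 * a / (1 + b) * (e * d ^ 2 * c / (1 + d)) =
      (d * c ^ 2 * b / (1 + c)) ^ 2 * (e * a / ((1 + d) * (1 + b) / (1 + c⁻¹) ^ 2)) := by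
  field_simp
  ring

lemma somos4Y_iff_somos4Z (a b c d e : K) (hb : b ≠ 0) (hc : c ≠ 0) (hd : d ≠ 0)
    (hb₁ : 1 + b ≠ 0) (hc₁ : 1 + c ≠ 0) (hd₁ : 1 + d ≠ 0) :
    e * a = (1 + d) * (1 + b) / (1 + c⁻¹) ^ 2 ↔
      c * b ^ 2 * a / (1 + b) * (e * d ^ 2 * c / (1 + d)) = (d * c ^ 2 * b / (1 + c)) ^ 2 := by
  have hc₁' : 1 + c⁻¹ ≠ 0 := by
    rwa [← mul_ne_zero_iff_left hc, mul_add, mul_one, mul_inv_cancel₀ hc, add_comm]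
  rw [somos4Z_mul_eq_sq_mul a b c d e hb hc hd hb₁ hc₁ hd₁, mul_eq_left₀ (by simp [*]),
    div_eq_one_iff_eq (by simp [*])]

end Field

/-- A positive sequence `y` satisfies the Somos-4 Y-system iff the quantity
`Z_n = y_{n+2} y_{n+1}^2 y_n / (1 + y_{n+1})` satisfies `Z_n Z_{n+2} = Z_{n+1}^2`. -/
theorem somos4_Ysystem_iff_Zsystem (y : ℕ → ℝ) (hy : ∀ n, 0 < y n)
    (Z : ℕ → ℝ)
    (hZ : ∀ n, Z n = y (n + 2) * (y (n + 1)) ^ 2 * y n / (1 + y (n + 1))) :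
    (∀ n : ℕ, y (n + 4) * y n =
      (1 + y (n + 3)) * (1 + y (n + 1)) / (1 + (y (n + 2))⁻¹) ^ 2) ↔
    (∀ n : ℕ, Z n * Z (n + 2) = (Z (n + 1)) ^ 2) := by
  have hy₁ (n : ℕ) : 1 + y n ≠ 0 := by linarith [hy n]
  refine forall_congr' fun n ↦ ?_
  rw [hZ n, hZ (n + 1), hZ (n + 2)]
  exact somos4Y_iff_somos4Z _ _ _ _ _ (hy _).ne' (hy _).ne' (hy _).ne' (hy₁ _) (hy₁ _) (hy₁ _)
end

section
/- Let x : ℕ → ℝ be a sequence with x_n > 0 for all n satisfying the Somos-4 recurrence x_{n+4} · x_n = x_{n+3} · x_{n+1} + x_{n+2}^2 for all n ∈ ℕ. Then the gauge-invariant quantities Y_n := x_n · x_{n+2} / x_{n+1}^2 satisfy the second-order recurrence Y_{n+2} · Y_n = (Y_{n+1} + 1) / Y_{n+1}^2 for all n ∈ ℕ. -/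
/-!
Both sides are rational in `x n, …, x (n + 4)` with common denominator `(x (n+1) x (n+3))²`:
`Y (n+2) Y n = x (n+2)² · x n x (n+4) / (x (n+1) x (n+3))²`, while for `t = Y (n+1)`,
`(t + 1) / t² = x (n+2)² · (x (n+1) x (n+3) + x (n+2)²) / (x (n+1) x (n+3))²`.
The numerators agree by the Somos-4 relation.
-/

section

variable {K : Type*} [Field K]

def gaugeRatio (x : ℕ → K) (n : ℕ) : K := x n * x (n + 2) / x (n + 1) ^ 2

theorem gaugeRatio_add_two_mul_gaugeRatio {x : ℕ → K} {n : ℕ}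
    (h₁ : x (n + 1) ≠ 0) (h₂ : x (n + 2) ≠ 0) (h₃ : x (n + 3) ≠ 0)
    (hrec : x (n + 4) * x n = x (n + 3) * x (n + 1) + x (n + 2) ^ 2) :
    gaugeRatio x (n + 2) * gaugeRatio x n =
      (gaugeRatio x (n + 1) + 1) / gaugeRatio x (n + 1) ^ 2 := by
  simp only [gaugeRatio, add_assoc, Nat.reduceAdd]
  field_simp
  linear_combination hrec

end

/-- If a positive sequence satisfies the Somos-4 recurrence, then the gauge-invariant
quantities `Y_n = x_n x_{n+2}/x_{n+1}^2` satisfy the QRT-type recurrence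
`Y_{n+2} Y_n = (Y_{n+1}+1)/Y_{n+1}^2`. -/
theorem somos4_to_QRT (x : ℕ → ℝ) (hx : ∀ n, 0 < x n)
    (hrec : ∀ n : ℕ, x (n + 4) * x n = x (n + 3) * x (n + 1) + (x (n + 2)) ^ 2)
    (Y : ℕ → ℝ) (hY : ∀ n, Y n = x n * x (n + 2) / (x (n + 1)) ^ 2) :
    ∀ n : ℕ, Y (n + 2) * Y n = (Y (n + 1) + 1) / (Y (n + 1)) ^ 2 := by
  obtain rfl : Y = gaugeRatio x := funext hY
  intro n
  exact gaugeRatio_add_two_mul_gaugeRatio (hx _).ne' (hx _).ne' (hx _).ne' (hrec n)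
end

section
/- Let Y : ℕ → ℝ be a sequence with Y_n > 0 for all n satisfying Y_{n+2} · Y_n = (Y_{n+1} + 1) / Y_{n+1}^2 for all n ∈ ℕ. Then the quantity H_n := ((Y_n Y_{n+1})^2 + Y_n + Y_{n+1} + 1) / (Y_n Y_{n+1}) is a first integral: H_{n+1} = H_n for all n ∈ ℕ. Equivalently, each point (Y_n, Y_{n+1}) lies on the fixed biquadratic curve (Y_1 Y_2)^2 − H · Y_1 Y_2 + Y_1 + Y_2 + 1 = 0 with H = H_0. -/
/-!
Write `H(x, y)` for `somosQRTInvariant x y`. Clearing denominators, `H(y, z) = H(x, y)`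
becomes `y (z - x) (z x y² - y - 1) = 0`, a multiple of the recurrence `z x y² = y + 1`; so `H`
is constant along orbits, and multiplying `H_n = H_0` by `Y_n Y_{n+1}` puts every point on the
curve of level `H_0`.
-/

section QRTInvariant

variable {K : Type*} [Field K]

def somosQRTInvariant (x y : K) : K := ((x * y) ^ 2 + x + y + 1) / (x * y)

theorem somosQRTInvariant_step {x y z : K} (hx : x ≠ 0) (hy : y ≠ 0) (hz : z ≠ 0)
    (hrec : z * x = (y + 1) / y ^ 2) :
    somosQRTInvariant y z = somosQRTInvariant x y := by
  have hrec' : z * x * y ^ 2 = y + 1 := by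
    rw [hrec]
    field_simp
  unfold somosQRTInvariant
  rw [div_eq_div_iff (mul_ne_zero hy hz) (mul_ne_zero hx hy)]
  linear_combination (y * (z - x)) * hrec'

theorem somosQRTInvariant_curve {x y : K} (hx : x ≠ 0) (hy : y ≠ 0) :
    (x * y) ^ 2 - somosQRTInvariant x y * (x * y) + x + y + 1 = 0 := by
  rw [somosQRTInvariant, div_mul_cancel₀ _ (mul_ne_zero hx hy)]
  ring

end QRTInvariant

/-- For a positive solution of the Somos-4 QRT recurrence, the quantity
`H_n = ((Y_n Y_{n+1})^2 + Y_n + Y_{n+1} + 1)/(Y_n Y_{n+1})` is a first integral,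
i.e. each point `(Y_n, Y_{n+1})` lies on the fixed biquadratic curve with `H = H_0`. -/
theorem somos4_QRT_first_integral (Y : ℕ → ℝ) (hY : ∀ n, 0 < Y n)
    (hrec : ∀ n : ℕ, Y (n + 2) * Y n = (Y (n + 1) + 1) / (Y (n + 1)) ^ 2)
    (H : ℕ → ℝ)
    (hH : ∀ n, H n = ((Y n * Y (n + 1)) ^ 2 + Y n + Y (n + 1) + 1) / (Y n * Y (n + 1))) :
    (∀ n : ℕ, H (n + 1) = H n) ∧
    (∀ n : ℕ, (Y n * Y (n + 1)) ^ 2 - H 0 * (Y n * Y (n + 1))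
        + Y n + Y (n + 1) + 1 = 0) := by
  have hY0 (n : ℕ) : Y n ≠ 0 := (hY n).ne'
  have hH' (n : ℕ) : H n = somosQRTInvariant (Y n) (Y (n + 1)) := hH n
  have step (n : ℕ) : H (n + 1) = H n := by
    rw [hH', hH']
    exact somosQRTInvariant_step (hY0 n) (hY0 (n + 1)) (hY0 (n + 2)) (hrec n)
  have const (n : ℕ) : H n = H 0 := Nat.rec rfl (fun k ih => (step k).trans ih) n
  refine ⟨step, fun n => ?_⟩
  rw [← const n, hH']
  exact somosQRTInvariant_curve (hY0 n) (hY0 (n + 1))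
end

section
/- Let β > 0, 𝔮 > 0, and let x : ℕ → ℝ be a sequence with x_n > 0 for all n satisfying the non-autonomous bilinear recurrence x_{n+4} · x_n = β · 𝔮^n · (x_{n+3} x_{n+1} + x_{n+2}^2) for all n ∈ ℕ. Then y_n := x_n · x_{n+2} / x_{n+1}^2 satisfies the q-Painlevé I equation y_{n+2} · y_n = β · 𝔮^n · (1 + y_{n+1}) / y_{n+1}^2 for all n ∈ ℕ. -/
/-! In terms of `x`, `y_{n+2} y_n = x_n x_{n+4} x_{n+2}^2 / (x_{n+1} x_{n+3})^2` and
`(1 + y_{n+1}) / y_{n+1}^2 = (x_{n+1} x_{n+3} + x_{n+2}^2) x_{n+2}^2 / (x_{n+1} x_{n+3})^2`, so after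
clearing the common factor the q-Painlevé I equation is the bilinear recurrence itself. -/

theorem qPI_of_bilinear {K : Type*} [Field K] {x₀ x₁ x₂ x₃ x₄ r : K}
    (h₁ : x₁ ≠ 0) (h₂ : x₂ ≠ 0) (h₃ : x₃ ≠ 0)
    (hrec : x₄ * x₀ = r * (x₃ * x₁ + x₂ ^ 2)) :
    x₂ * x₄ / x₃ ^ 2 * (x₀ * x₂ / x₁ ^ 2) = r * (1 + x₁ * x₃ / x₂ ^ 2) / (x₁ * x₃ / x₂ ^ 2) ^ 2 := by
  field_simp
  linear_combination hrec

theorem bilinear_dPI_to_qPI_general (β 𝔮 : ℝ)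
    (x : ℕ → ℝ) (hx : ∀ n, 0 < x n)
    (hrec : ∀ n : ℕ, x (n + 4) * x n = β * 𝔮 ^ n * (x (n + 3) * x (n + 1) + (x (n + 2)) ^ 2))
    (y : ℕ → ℝ) (hy : ∀ n, y n = x n * x (n + 2) / (x (n + 1)) ^ 2) :
    ∀ n : ℕ, y (n + 2) * y n = β * 𝔮 ^ n * (1 + y (n + 1)) / (y (n + 1)) ^ 2 := by
  intro n
  simp only [hy]
  exact qPI_of_bilinear (hx _).ne' (hx _).ne' (hx _).ne' (hrec n)

/-- If a positive sequence satisfies the non-autonomous bilinear recurrence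
`x_{n+4} x_n = β 𝔮^n (x_{n+3} x_{n+1} + x_{n+2}^2)`, then `y_n = x_n x_{n+2}/x_{n+1}^2`
satisfies the q-Painlevé I equation `y_{n+2} y_n = β 𝔮^n (1+y_{n+1})/y_{n+1}^2`. -/
theorem bilinear_dPI_to_qPI (β 𝔮 : ℝ) (hβ : 0 < β) (h𝔮 : 0 < 𝔮)
    (x : ℕ → ℝ) (hx : ∀ n, 0 < x n)
    (hrec : ∀ n : ℕ, x (n + 4) * x n = β * 𝔮 ^ n * (x (n + 3) * x (n + 1) + (x (n + 2)) ^ 2))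
    (y : ℕ → ℝ) (hy : ∀ n, y n = x n * x (n + 2) / (x (n + 1)) ^ 2) :
    ∀ n : ℕ, y (n + 2) * y n = β * 𝔮 ^ n * (1 + y (n + 1)) / (y (n + 1)) ^ 2 :=
  bilinear_dPI_to_qPI_general β 𝔮 x hx hrec y hy
end

section
/- Let c₁, c₂, d₁, d₂ be positive reals satisfying the constraints c₁c₂d₁ = 1 and d₁d₂ = 1, and set Y₁ := √(c₁d₁/c₂) and Y₂ := √(c₂d₁/c₁). Then the Hamiltonian H₁ = c₁ + c₂ + d₁ + d₂ of the 2-particle relativistic Toda lattice equals ((Y₁Y₂)² + Y₁ + Y₂ + 1) / (Y₁Y₂), i.e. it coincides with the first integral of the Somos-4 QRT map obtained by solving the biquadratic (Y₁Y₂)² − H·Y₁Y₂ + Y₁ + Y₂ + 1 = 0 for H. -/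
/-! On the leaf `c₁c₂d₁ = 1` the square roots disappear: `c₁d₁/c₂ = (c₁d₁)²` and
`c₂d₁/c₁ = (c₂d₁)²`, so `Y₁ = c₁d₁` and `Y₂ = c₂d₁`. Then `Y₁Y₂ = d₁` and, using `d₂ = 1/d₁`,
`((Y₁Y₂)² + Y₁ + Y₂ + 1)/(Y₁Y₂) = d₁ + c₁ + c₂ + 1/d₁ = H₁`. -/

def somos4Integral {K : Type*} [Field K] (Y₁ Y₂ : K) : K :=
  ((Y₁ * Y₂) ^ 2 + Y₁ + Y₂ + 1) / (Y₁ * Y₂)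

lemma Real.sqrt_div_eq_self_of_mul_eq_one {x b : ℝ} (hx : 0 ≤ x) (h : x * b = 1) :
    √(x / b) = x := by
  have hb : b ≠ 0 := right_ne_zero_of_mul_eq_one h
  have hsq : x / b = x ^ 2 := by
    rw [div_eq_iff hb]
    linear_combination -x * h
  rw [hsq, Real.sqrt_sq hx]

lemma relToda_hamiltonian_eq_somos4Integral {K : Type*} [Field K] {c₁ c₂ d₁ d₂ : K}
    (h1 : c₁ * c₂ * d₁ = 1) (h2 : d₁ * d₂ = 1) :
    c₁ + c₂ + d₁ + d₂ = somos4Integral (c₁ * d₁) (c₂ * d₁) := by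
  have hd₁ : d₁ ≠ 0 := left_ne_zero_of_mul_eq_one h2
  have hY : c₁ * d₁ * (c₂ * d₁) = d₁ := by linear_combination d₁ * h1
  rw [somos4Integral, hY, eq_div_iff hd₁]
  linear_combination h2

theorem relToda_hamiltonian_eq_somos4_integral_general
    (c₁ c₂ d₁ d₂ : ℝ) (hc₁ : 0 < c₁) (hc₂ : 0 < c₂) (hd₁ : 0 < d₁)
    (h1 : c₁ * c₂ * d₁ = 1) (h2 : d₁ * d₂ = 1)
    (Y₁ Y₂ : ℝ) (hY₁ : Y₁ = Real.sqrt (c₁ * d₁ / c₂)) (hY₂ : Y₂ = Real.sqrt (c₂ * d₁ / c₁)) :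
    c₁ + c₂ + d₁ + d₂ = ((Y₁ * Y₂) ^ 2 + Y₁ + Y₂ + 1) / (Y₁ * Y₂) := by
  rw [hY₁, hY₂, Real.sqrt_div_eq_self_of_mul_eq_one (by positivity) (by linear_combination h1),
    Real.sqrt_div_eq_self_of_mul_eq_one (by positivity) (by linear_combination h1)]
  exact relToda_hamiltonian_eq_somos4Integral h1 h2

/-- On the symplectic leaf `c₁c₂d₁ = 1`, `d₁d₂ = 1` of the 2-particle relativistic Toda
lattice, the Hamiltonian `H₁ = c₁ + c₂ + d₁ + d₂` coincides with the Somos-4 first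
integral `((Y₁Y₂)² + Y₁ + Y₂ + 1)/(Y₁Y₂)` in the coordinates
`Y₁ = √(c₁d₁/c₂)`, `Y₂ = √(c₂d₁/c₁)`. -/
theorem relToda_hamiltonian_eq_somos4_integral
    (c₁ c₂ d₁ d₂ : ℝ) (hc₁ : 0 < c₁) (hc₂ : 0 < c₂) (hd₁ : 0 < d₁) (hd₂ : 0 < d₂)
    (h1 : c₁ * c₂ * d₁ = 1) (h2 : d₁ * d₂ = 1)
    (Y₁ Y₂ : ℝ) (hY₁ : Y₁ = Real.sqrt (c₁ * d₁ / c₂)) (hY₂ : Y₂ = Real.sqrt (c₂ * d₁ / c₁)) :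
    c₁ + c₂ + d₁ + d₂ = ((Y₁ * Y₂) ^ 2 + Y₁ + Y₂ + 1) / (Y₁ * Y₂) :=
  relToda_hamiltonian_eq_somos4_integral_general c₁ c₂ d₁ d₂ hc₁ hc₂ hd₁ h1 h2 Y₁ Y₂ hY₁ hY₂
end

section
/- Let c₁, c₂, d₁, d₂ be positive reals satisfying c₁c₂d₁ = 1 and d₁d₂ = 1, and set Y₁ := √(c₁d₁/c₂), Y₂ := √(c₂d₁/c₁). Define the Bäcklund transformation c̃₁ = c₂d₁/(c₂+d₂), c̃₂ = c₁, d̃₁ = c₂+d₂, d̃₂ = d₁d₂/(c₂+d₂). Then the Casimirs are preserved, i.e. c̃₁c̃₂d̃₁ = c₁c₂d₁ = 1 and d̃₁d̃₂ = d₁d₂ = 1, and the transformed variables Ỹ₁ := √(c̃₁d̃₁/c̃₂), Ỹ₂ := √(c̃₂d̃₁/c̃₁) satisfy Ỹ₁ = Y₂ and Ỹ₂ = (Y₂ + 1)/(Y₁Y₂²); that is, on the symplectic leaves the Bäcklund transformation coincides with the Somos-4 QRT map (Y₁, Y₂) ↦ (Y₂, (Y₂+1)/(Y₁Y₂²)).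 -/
/-!
On the leaf `c₁c₂d₁ = 1` the coordinates are simply `Y₁ = c₂⁻¹` and `Y₂ = c₁⁻¹`, because
`c₁d₁/c₂ = c₂⁻²` and `c₂d₁/c₁ = c₁⁻²`. The Bäcklund transformation preserves the Casimirs, so the
same holds for the transformed point: `Ỹ₁ = c̃₂⁻¹ = c₁⁻¹ = Y₂` and
`Ỹ₂ = c̃₁⁻¹ = (c₂ + d₂)/(c₂d₁)`, which on the leaf (where `d₂ = d₁⁻¹ = c₁c₂`) equals
`c₁c₂(1 + c₁) = (Y₂ + 1)/(Y₁Y₂²)`.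
-/

namespace RelToda

theorem sqrt_mul_div_eq_inv {a b d : ℝ} (hb : 0 ≤ b) (h : a * b * d = 1) :
    Real.sqrt (a * d / b) = b⁻¹ := by
  have hb0 : b ≠ 0 := by rintro rfl; simp at h
  have hsq : a * d / b = b⁻¹ ^ 2 := by
    field_simp
    linear_combination h
  rw [hsq, Real.sqrt_sq (inv_nonneg.mpr hb)]

theorem sqrt_mul_div_eq_inv' {a b d : ℝ} (ha : 0 ≤ a) (h : a * b * d = 1) :
    Real.sqrt (b * d / a) = a⁻¹ :=
  sqrt_mul_div_eq_inv ha (by rwa [mul_comm b a])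

theorem backlund_casimir_c {c₁ c₂ d₁ d₂ : ℝ} (h : c₂ + d₂ ≠ 0) :
    c₂ * d₁ / (c₂ + d₂) * c₁ * (c₂ + d₂) = c₁ * c₂ * d₁ := by
  field_simp

theorem backlund_inv_c₁_eq_somos4 {c₁ c₂ d₁ d₂ : ℝ} (h1 : c₁ * c₂ * d₁ = 1) (h2 : d₁ * d₂ = 1) :
    (c₂ * d₁ / (c₂ + d₂))⁻¹ = (c₁⁻¹ + 1) / (c₂⁻¹ * c₁⁻¹ ^ 2) := by
  have hc₁ : c₁ ≠ 0 := by rintro rfl; simp at h1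
  have hc₂ : c₂ ≠ 0 := by rintro rfl; simp at h1
  have hd₁ : d₁ ≠ 0 := by rintro rfl; simp at h1
  have hd₂ : d₂ = c₁ * c₂ := by linear_combination c₁ * c₂ * h2 - d₂ * h1
  rw [inv_div, hd₂]
  field_simp
  linear_combination -(1 + c₁) * h1

end RelToda

open RelToda in
/-- On the symplectic leaf `c₁c₂d₁ = 1`, `d₁d₂ = 1`, the Bäcklund transformation
`c̃₁ = c₂d₁/(c₂+d₂)`, `c̃₂ = c₁`, `d̃₁ = c₂+d₂`, `d̃₂ = d₁d₂/(c₂+d₂)` of the 2-particle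
relativistic Toda lattice preserves the Casimirs and coincides with the Somos-4 QRT map
`(Y₁, Y₂) ↦ (Y₂, (Y₂+1)/(Y₁Y₂²))` in the coordinates `Y₁ = √(c₁d₁/c₂)`, `Y₂ = √(c₂d₁/c₁)`. -/
theorem relToda_backlund_is_somos4_QRT
    (c₁ c₂ d₁ d₂ : ℝ) (hc₁ : 0 < c₁) (hc₂ : 0 < c₂) (hd₁ : 0 < d₁) (hd₂ : 0 < d₂)
    (h1 : c₁ * c₂ * d₁ = 1) (h2 : d₁ * d₂ = 1)
    (Y₁ Y₂ : ℝ) (hY₁ : Y₁ = Real.sqrt (c₁ * d₁ / c₂)) (hY₂ : Y₂ = Real.sqrt (c₂ * d₁ / c₁))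
    (c₁' c₂' d₁' d₂' : ℝ)
    (hc₁' : c₁' = c₂ * d₁ / (c₂ + d₂)) (hc₂' : c₂' = c₁)
    (hd₁' : d₁' = c₂ + d₂) (hd₂' : d₂' = d₁ * d₂ / (c₂ + d₂))
    (Y₁' Y₂' : ℝ) (hY₁' : Y₁' = Real.sqrt (c₁' * d₁' / c₂'))
    (hY₂' : Y₂' = Real.sqrt (c₂' * d₁' / c₁')) :
    (c₁' * c₂' * d₁' = 1 ∧ d₁' * d₂' = 1) ∧
    Y₁' = Y₂ ∧ Y₂' = (Y₂ + 1) / (Y₁ * Y₂ ^ 2) := by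
  have hsum : c₂ + d₂ ≠ 0 := (add_pos hc₂ hd₂).ne'
  have hcas₁ : c₁' * c₂' * d₁' = 1 := by
    rw [hc₁', hc₂', hd₁', backlund_casimir_c hsum, h1]
  have hcas₂ : d₁' * d₂' = 1 := by rw [hd₁', hd₂', mul_div_cancel₀ _ hsum, h2]
  have hc₁'_nonneg : 0 ≤ c₁' := hc₁' ▸ by positivity
  have hY₁_eq : Y₁ = c₂⁻¹ := hY₁ ▸ sqrt_mul_div_eq_inv hc₂.le h1
  have hY₂_eq : Y₂ = c₁⁻¹ := hY₂ ▸ sqrt_mul_div_eq_inv' hc₁.le h1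
  have hY₁'_eq : Y₁' = c₁⁻¹ := hY₁' ▸ hc₂' ▸ sqrt_mul_div_eq_inv (hc₂' ▸ hc₁.le) hcas₁
  have hY₂'_eq : Y₂' = c₁'⁻¹ := hY₂' ▸ sqrt_mul_div_eq_inv' hc₁'_nonneg hcas₁
  refine ⟨⟨hcas₁, hcas₂⟩, hY₁'_eq.trans hY₂_eq.symm, ?_⟩
  rw [hY₂'_eq, hc₁', hY₁_eq, hY₂_eq]
  exact backlund_inv_c₁_eq_somos4 h1 h2
end

section
/- Let N ≥ 2 and let B = (b_{jk}) be an N×N skew-symmetric integer matrix satisfying the period-1 conditions: b_{j,N} = b_{1,j+1} for 1 ≤ j ≤ N−1, and b_{j+1,k+1} = b_{j,k} + b_{1,j+1}·[−b_{1,k+1}]₊ − b_{1,k+1}·[−b_{1,j+1}]₊ for 1 ≤ j,k ≤ N−1, where [b]₊ := max(b,0). Then the reversal of each row equals the negative of the opposite row: b_{j, N−k+1} = −b_{N−j+1, k} for all 1 ≤ j,k ≤ N; equivalently, B is symmetric about the skew diagonal, b_{jk} = b_{N−k+1, N−j+1} for all j,k. -/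
/-!
Write `a = b 1` for the first row and `μ(u, v) = u [-v]₊ - v [-u]₊`, so that the second
period-1 condition reads `b (j+1) (k+1) = b j k + μ(a (j+1), a (k+1))`; since `μ` is antisymmetric,
sums of `μ` along a diagonal cancel in pairs as soon as `a` is a palindrome on the indices involved.

First, `a` is a palindrome: `a i = a (N + 2 - i)` for `2 ≤ i ≤ N`. By the first period-1 condition
`a i = b (i-1) N`, and walking down the diagonal from `b 1 (N + 2 - i)` to `b (i-1) N` adds a sum of
`μ` over indices `< i`, which cancels by strong induction on `i`.

Given the palindrome, the skew transpose `(j, k) ↦ b (N-k+1) (N-j+1)` is again skew-symmetric,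
satisfies the same diagonal recurrence and has the same first row; a skew-symmetric matrix obeying
the recurrence is determined by its first row, so it equals `b`.
-/

open Finset

namespace PeriodOne

def mutationCorrection (u v : ℤ) : ℤ := u * max (-v) 0 - v * max (-u) 0

lemma mutationCorrection_swap (u v : ℤ) : mutationCorrection v u = -mutationCorrection u v := by
  unfold mutationCorrection; ring

/-- `a` plays the role of the first row `b 1`. -/
def DiagRecurrence (N : ℕ) (a : ℕ → ℤ) (f : ℕ → ℕ → ℤ) : Prop :=
  ∀ j k, 1 ≤ j → j ≤ N - 1 → 1 ≤ k → k ≤ N - 1 →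
    f (j + 1) (k + 1) = f j k + mutationCorrection (a (j + 1)) (a (k + 1))

def IsSkewOn (N : ℕ) (f : ℕ → ℕ → ℤ) : Prop :=
  ∀ j k, 1 ≤ j → j ≤ N → 1 ≤ k → k ≤ N → f j k = -f k j

def skewTranspose (N : ℕ) (f : ℕ → ℕ → ℤ) (j k : ℕ) : ℤ := f (N - k + 1) (N - j + 1)

lemma sum_range_eq_zero_of_reflect_eq_neg {g : ℕ → ℤ} {n : ℕ}
    (h : ∀ i < n, g (n - 1 - i) = -g i) : ∑ i ∈ range n, g i = 0 := by
  have hreflect := sum_range_reflect g n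
  rw [sum_congr rfl fun i hi => h i (mem_range.mp hi), sum_neg_distrib] at hreflect
  linarith

lemma sum_mutationCorrection_eq_zero {a : ℕ → ℤ} {p q n : ℕ}
    (ha : ∀ i < n, a (p + i) = a (q + (n - 1 - i))) :
    ∑ i ∈ range n, mutationCorrection (a (p + i)) (a (q + i)) = 0 := by
  refine sum_range_eq_zero_of_reflect_eq_neg fun i hi => ?_
  have hrefl := ha (n - 1 - i) (by omega)
  rw [show n - 1 - (n - 1 - i) = i by omega] at hrefl
  rw [ha i hi, hrefl, mutationCorrection_swap]

namespace DiagRecurrence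

variable {N : ℕ} {a : ℕ → ℤ} {f : ℕ → ℕ → ℤ}

lemma apply_add_add (hf : DiagRecurrence N a f) {j k : ℕ} (hj : 1 ≤ j) (hk : 1 ≤ k) :
    ∀ t, j + t ≤ N → k + t ≤ N →
      f (j + t) (k + t) = f j k + ∑ i ∈ range t, mutationCorrection (a (j + 1 + i)) (a (k + 1 + i))
  | 0, _, _ => by simp
  | t + 1, hjt, hkt => by
    rw [← add_assoc, ← add_assoc, hf (j + t) (k + t) (by omega) (by omega) (by omega) (by omega),
      hf.apply_add_add hj hk t (by omega) (by omega), sum_range_succ, add_right_comm j t 1,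
      add_right_comm k t 1, add_assoc]

lemma firstRow_palindrome {b : ℕ → ℕ → ℤ} (h1 : ∀ j, 1 ≤ j → j ≤ N - 1 → b j N = b 1 (j + 1))
    (h2 : DiagRecurrence N (b 1) b) :
    ∀ i j, 2 ≤ i → 2 ≤ j → i + j = N + 2 → b 1 i = b 1 j := by
  intro i
  induction i using Nat.strong_induction_on with
  | _ i ih =>
    intro j hi hj hij
    have hcolumn := h1 (i - 1) (by omega) (by omega)
    have hdiag := h2.apply_add_add le_rfl (by omega : 1 ≤ j) (i - 2) (by omega) (by omega)
    have hcancel : ∑ l ∈ range (i - 2),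
        mutationCorrection (b 1 (1 + 1 + l)) (b 1 (j + 1 + l)) = 0 :=
      sum_mutationCorrection_eq_zero fun l hl => ih (1 + 1 + l) (by omega) _ (by omega) (by omega)
        (by omega)
    rw [show i - 1 + 1 = i by omega] at hcolumn
    rw [show 1 + (i - 2) = i - 1 by omega, show j + (i - 2) = N by omega, hcancel,
      add_zero] at hdiag
    rw [← hcolumn, hdiag]

lemma skewTranspose (hf : DiagRecurrence N a f)
    (ha : ∀ i j, 2 ≤ i → 2 ≤ j → i + j = N + 2 → a i = a j) :
    DiagRecurrence N a (PeriodOne.skewTranspose N f) := by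
  intro j k hj hjN hk hkN
  unfold PeriodOne.skewTranspose
  rw [show N - (k + 1) + 1 = N - k by omega, show N - (j + 1) + 1 = N - j by omega,
    hf (N - k) (N - j) (by omega) (by omega) (by omega) (by omega),
    ha (N - k + 1) (k + 1) (by omega) (by omega) (by omega),
    ha (N - j + 1) (j + 1) (by omega) (by omega) (by omega), mutationCorrection_swap (a (k + 1))]
  ring

lemma eqOn_of_firstRow {g : ℕ → ℕ → ℤ} (hf : DiagRecurrence N a f) (hg : DiagRecurrence N a g)
    (hf_skew : IsSkewOn N f) (hg_skew : IsSkewOn N g)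
    (hrow : ∀ k, 1 ≤ k → k ≤ N → f 1 k = g 1 k) :
    ∀ j k, 1 ≤ j → j ≤ N → 1 ≤ k → k ≤ N → f j k = g j k := by
  intro j
  induction j with
  | zero => omega
  | succ j ih =>
    intro k hj hjN hk hkN
    obtain rfl | hj := Nat.eq_zero_or_pos j
    · exact hrow k hk hkN
    obtain rfl | hk := hk.eq_or_lt
    · rw [hf_skew, hg_skew, hrow] <;> omega
    obtain ⟨k, rfl⟩ : ∃ k', k = k' + 1 := ⟨k - 1, by omega⟩
    rw [hf j k, hg j k, ih k] <;> omega

end DiagRecurrence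

lemma IsSkewOn.skewTranspose {N : ℕ} {f : ℕ → ℕ → ℤ} (hf : IsSkewOn N f) :
    IsSkewOn N (skewTranspose N f) :=
  fun j k _ _ _ _ => hf _ _ (by omega) (by omega) (by omega) (by omega)

lemma IsSkewOn.apply_self_eq_zero {N : ℕ} {f : ℕ → ℕ → ℤ} (hf : IsSkewOn N f) {j : ℕ}
    (hj : 1 ≤ j) (hjN : j ≤ N) : f j j = 0 := by
  linarith [hf j j hj hjN hj hjN]

end PeriodOne

open PeriodOne

theorem period1_matrix_skew_diagonal_symmetry_general
    (N : ℕ) (b : ℕ → ℕ → ℤ)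
    (hskew : ∀ j k, 1 ≤ j → j ≤ N → 1 ≤ k → k ≤ N → b j k = - b k j)
    (h1 : ∀ j, 1 ≤ j → j ≤ N - 1 → b j N = b 1 (j + 1))
    (h2 : ∀ j k, 1 ≤ j → j ≤ N - 1 → 1 ≤ k → k ≤ N - 1 →
      b (j + 1) (k + 1) = b j k + b 1 (j + 1) * max (-(b 1 (k + 1))) 0
        - b 1 (k + 1) * max (-(b 1 (j + 1))) 0) :
    ∀ j k, 1 ≤ j → j ≤ N → 1 ≤ k → k ≤ N →
      b j (N - k + 1) = - b (N - j + 1) k ∧ b j k = b (N - k + 1) (N - j + 1) := by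
  have hrec : DiagRecurrence N (b 1) b := fun j k hj hjN hk hkN => by
    rw [h2 j k hj hjN hk hkN, mutationCorrection]; ring
  have hskewOn : IsSkewOn N b := hskew
  have hpal := hrec.firstRow_palindrome h1
  have hrow : ∀ k, 1 ≤ k → k ≤ N → b 1 k = skewTranspose N b 1 k := by
    intro k hk hkN
    obtain rfl | hk := hk.eq_or_lt
    · simp only [skewTranspose, Nat.sub_add_cancel (by omega : 1 ≤ N),
        hskewOn.apply_self_eq_zero le_rfl hkN, hskewOn.apply_self_eq_zero hkN le_rfl]
    · rw [skewTranspose, show N - 1 + 1 = N by omega, h1 _ (by omega) (by omega),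
        hpal k (N - k + 1 + 1) (by omega) (by omega) (by omega)]
  have hsymm := hrec.eqOn_of_firstRow (hrec.skewTranspose hpal) hskewOn hskewOn.skewTranspose hrow
  intro j k hj hjN hk hkN
  refine ⟨?_, hsymm j k hj hjN hk hkN⟩
  rw [hsymm j (N - k + 1) hj hjN (by omega) (by omega), skewTranspose,
    show N - (N - k + 1) + 1 = k by omega, hskew k _ hk hkN (by omega) (by omega)]

/-- A skew-symmetric integer matrix satisfying the Fordy–Marsh period-1 conditions is
symmetric about the skew diagonal: the reversal of each row equals the negative of the
opposite row. Entries are indexed with `1 ≤ j, k ≤ N`. -/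
theorem period1_matrix_skew_diagonal_symmetry
    (N : ℕ) (hN : 2 ≤ N) (b : ℕ → ℕ → ℤ)
    (hskew : ∀ j k, 1 ≤ j → j ≤ N → 1 ≤ k → k ≤ N → b j k = - b k j)
    (h1 : ∀ j, 1 ≤ j → j ≤ N - 1 → b j N = b 1 (j + 1))
    (h2 : ∀ j k, 1 ≤ j → j ≤ N - 1 → 1 ≤ k → k ≤ N - 1 →
      b (j + 1) (k + 1) = b j k + b 1 (j + 1) * max (-(b 1 (k + 1))) 0
        - b 1 (k + 1) * max (-(b 1 (j + 1))) 0) :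
    ∀ j k, 1 ≤ j → j ≤ N → 1 ≤ k → k ≤ N →
      b j (N - k + 1) = - b (N - j + 1) k ∧ b j k = b (N - k + 1) (N - j + 1) :=
  period1_matrix_skew_diagonal_symmetry_general N b hskew h1 h2
end

section
/- Let N ≥ 2 and let B = (b_{jk}) be an N×N skew-symmetric integer matrix satisfying the period-1 conditions: b_{j,N} = b_{1,j+1} for 1 ≤ j ≤ N−1, and b_{j+1,k+1} = b_{j,k} + b_{1,j+1}·[−b_{1,k+1}]₊ − b_{1,k+1}·[−b_{1,j+1}]₊ for 1 ≤ j,k ≤ N−1, where [b]₊ := max(b,0). Let im B ⊆ ℚ^N denote the ℚ-span of the rows of B. Then: (i) if v ∈ im B, then its reversal r(v), defined by r(v)_j = v_{N−j+1}, also lies in im B; (ii) if moreover v_N = 0 (i.e. the support of v is contained in [1, N−1]), then the shift s(v), defined by s(v)₁ = 0 and s(v)_j = v_{j−1} for 2 ≤ j ≤ N, also lies in im B. -/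
/-!
The period-1 recurrence `b (j+1) (k+1) = b j k + shiftCorrection (b 1 (j+1)) (b 1 (k+1))`, with
`shiftCorrection` antisymmetric, forces the first row to be a palindrome: telescoping
`b j N = b 1 (j+1)` down its diagonal to `b 1 (N-j+1)` leaves a sum whose terms cancel in pairs.
Then `B` is persymmetric, `b j k = b (N+1-k) (N+1-j)`, since both sides obey the same recurrence and
agree on the first row and column; with skew-symmetry this says `r (row j) = -row (N+1-j)`.

For the shift, the recurrence gives `s (row j) = row (j+1) + [-b 1 (j+1)]₊ • row 1 - b j N • u` for
`j < N` and `s (row N) = -row 1`, for one fixed vector `u`. Hence `s v + v_N • u ∈ im B` for every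
`v ∈ im B`.
-/

open Finset

lemma Finset.sum_range_eq_zero_of_reflect_eq_neg {M : Type*} [AddCommGroup M] [IsAddTorsionFree M]
    {m : ℕ} (g : ℕ → M) (hg : ∀ i < m, g (m - 1 - i) = -g i) :
    ∑ i ∈ range m, g i = 0 := by
  refine self_eq_neg.mp ?_
  calc ∑ i ∈ range m, g i = ∑ i ∈ range m, g (m - 1 - i) := (sum_range_reflect g m).symm
    _ = -∑ i ∈ range m, g i := by
      rw [← sum_neg_distrib]; exact sum_congr rfl fun i hi => hg i (mem_range.mp hi)

lemma eq_of_eq_on_firstRow_firstCol_of_diag_sub_eq {M : Type*} [AddGroup M] {N : ℕ}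
    (x y : ℕ → ℕ → M)
    (hdiag : ∀ j k, 1 ≤ j → j ≤ N - 1 → 1 ≤ k → k ≤ N - 1 →
      x (j + 1) (k + 1) - x j k = y (j + 1) (k + 1) - y j k)
    (hrow : ∀ k, 1 ≤ k → k ≤ N → x 1 k = y 1 k)
    (hcol : ∀ j, 1 ≤ j → j ≤ N → x j 1 = y j 1) :
    ∀ j k, 1 ≤ j → j ≤ N → 1 ≤ k → k ≤ N → x j k = y j k := by
  intro j k hj
  induction j, hj using Nat.le_induction generalizing k with
  | base => exact fun _ hk hkN => hrow k hk hkN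
  | succ j hj ih =>
    intro hjN hk hkN
    rcases Nat.lt_or_ge k 2 with hk1 | hk2
    · obtain rfl : k = 1 := by omega
      exact hcol _ (by omega) hjN
    · obtain ⟨k, rfl⟩ : ∃ k', k = k' + 1 := ⟨k - 1, by omega⟩
      have h := hdiag j k hj (by omega) (by omega) (by omega)
      rwa [ih k (by omega) (by omega) (by omega), sub_left_inj] at h

section

variable (R : Type*) [Semiring R]

def Fin.shiftRightLinear (N : ℕ) : (Fin N → R) →ₗ[R] (Fin N → R) where
  toFun v i :=
    if 0 < (i : ℕ) then v ⟨(i : ℕ) - 1, Nat.lt_of_le_of_lt (Nat.sub_le _ _) i.isLt⟩ else 0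
  map_add' v w := by ext i; split_ifs <;> simp_all
  map_smul' c v := by ext i; split_ifs <;> simp_all

variable {R}

lemma Submodule.apply_mem_span_of_forall_apply_mem_span {M : Type*} [AddCommMonoid M] [Module R M]
    (f : M →ₗ[R] M) {s : Set M} (hf : ∀ x ∈ s, f x ∈ span R s) {v : M} (hv : v ∈ span R s) :
    f v ∈ span R s :=
  (map_span_le f s _).mpr hf (mem_map_of_mem hv)

end

def shiftCorrection (x y : ℤ) : ℤ := x * max (-y) 0 - y * max (-x) 0

lemma shiftCorrection_swap (x y : ℤ) : shiftCorrection y x = -shiftCorrection x y := by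
  unfold shiftCorrection; ring

structure IsPeriodOne (N : ℕ) (b : ℕ → ℕ → ℤ) : Prop where
  skew : ∀ j k, 1 ≤ j → j ≤ N → 1 ≤ k → k ≤ N → b j k = -b k j
  lastCol : ∀ j, 1 ≤ j → j ≤ N - 1 → b j N = b 1 (j + 1)
  diag : ∀ j k, 1 ≤ j → j ≤ N - 1 → 1 ≤ k → k ≤ N - 1 →
    b (j + 1) (k + 1) = b j k + shiftCorrection (b 1 (j + 1)) (b 1 (k + 1))

def ratRows (N : ℕ) (b : ℕ → ℕ → ℤ) (j : Fin N) : Fin N → ℚ := fun k => b (j + 1) (k + 1)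

-- The vector `u` above; its entry `-1` at position 0 absorbs `b (j+1) 1 = -b 1 (j+1)`.
def shiftDefect (N : ℕ) (b : ℕ → ℕ → ℤ) : Fin N → ℚ :=
  fun i => if (i : ℕ) = 0 then -1 else ((max (-b 1 (i + 1)) 0 : ℤ) : ℚ)

namespace IsPeriodOne

variable {N : ℕ} {b : ℕ → ℕ → ℤ}

lemma diag_telescope (hB : IsPeriodOne N b) {j k : ℕ} (hj : 1 ≤ j) (hk : 1 ≤ k) :
    ∀ m, j + m ≤ N → k + m ≤ N →
      b (j + m) (k + m) = b j k +
        ∑ i ∈ range m, shiftCorrection (b 1 (j + i + 1)) (b 1 (k + i + 1))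
  | 0, _, _ => by simp
  | m + 1, hjm, hkm => by
    show b (j + m + 1) (k + m + 1) = _
    rw [hB.diag _ _ (by omega) (by omega) (by omega) (by omega),
      diag_telescope hB hj hk m (by omega) (by omega), sum_range_succ, add_assoc]

lemma firstRow_palindrome (hB : IsPeriodOne N b) :
    ∀ j, 1 ≤ j → j ≤ N - 1 → b 1 (j + 1) = b 1 (N - j + 1) := by
  intro j
  induction j using Nat.strong_induction_on with
  | _ j ih =>
    intro hj hjN
    obtain ⟨m, rfl⟩ : ∃ m, j = m + 1 := ⟨j - 1, by omega⟩
    have htel := hB.diag_telescope (j := 1) (k := N - m) le_rfl (by omega) m (by omega) (by omega)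
    rw [show 1 + m = m + 1 by omega, show N - m + m = N by omega,
      hB.lastCol (m + 1) (by omega) hjN] at htel
    rw [htel, show N - (m + 1) + 1 = N - m by omega, add_eq_left]
    -- terms `i` and `m - 1 - i` cancel, the first row being a palindrome below `m + 1`
    refine sum_range_eq_zero_of_reflect_eq_neg _ fun i hi => ?_
    rw [show 1 + (m - 1 - i) + 1 = m - i + 1 by omega,
      show N - m + (m - 1 - i) + 1 = N - (i + 1) + 1 by omega,
      ← ih (i + 1) (by omega) (by omega) (by omega),
      ih (m - i) (by omega) (by omega) (by omega),
      show N - (m - i) + 1 = N - m + i + 1 by omega, show i + 1 + 1 = 1 + i + 1 by omega]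
    exact shiftCorrection_swap _ _

lemma persymm (hB : IsPeriodOne N b) :
    ∀ j k, 1 ≤ j → j ≤ N → 1 ≤ k → k ≤ N → b j k = b (N + 1 - k) (N + 1 - j) := by
  have hrow : ∀ k, 1 ≤ k → k ≤ N → b 1 k = b (N + 1 - k) N := by
    intro k hk hkN
    obtain rfl | hk2 := eq_or_lt_of_le hk
    · have h11 := hB.skew 1 1 le_rfl (by omega) le_rfl (by omega)
      have hNN := hB.skew N N (by omega) le_rfl (by omega) le_rfl
      rw [show N + 1 - 1 = N by omega]; omega
    · rw [hB.lastCol (N + 1 - k) (by omega) (by omega),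
        show k = (k - 1) + 1 by omega, hB.firstRow_palindrome (k - 1) (by omega) (by omega)]
      congr 1; omega
  refine eq_of_eq_on_firstRow_firstCol_of_diag_sub_eq _ _ (fun j k hj hjN hk hkN => ?_) hrow
    (fun j hj hjN => ?_)
  · have hy := hB.diag (N - k) (N - j) (by omega) (by omega) (by omega) (by omega)
    rw [← hB.firstRow_palindrome k hk hkN, ← hB.firstRow_palindrome j hj hjN,
      shiftCorrection_swap] at hy
    rw [show N + 1 - (k + 1) = N - k by omega, show N + 1 - (j + 1) = N - j by omega,
      show N + 1 - k = N - k + 1 by omega, show N + 1 - j = N - j + 1 by omega, hy,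
      hB.diag j k hj hjN hk hkN]
    abel
  · rw [hB.skew j 1 hj hjN le_rfl (by omega), hrow j hj hjN,
      hB.skew (N + 1 - j) N (by omega) (by omega) (by omega) le_rfl, neg_neg,
      show N + 1 - 1 = N by omega]

lemma ratRows_rev (hB : IsPeriodOne N b) (j : Fin N) :
    (fun i => ratRows N b j i.rev) = -ratRows N b j.rev := by
  funext i
  simp only [ratRows, Fin.val_rev, Pi.neg_apply]
  have hi := i.isLt
  have hj := j.isLt
  rw [hB.persymm (j + 1) (N - (i + 1) + 1) (by omega) (by omega) (by omega) (by omega),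
    show N + 1 - (N - (i + 1) + 1) = i + 1 by omega,
    show N + 1 - (j + 1) = N - (j + 1) + 1 by omega,
    hB.skew _ (N - (j + 1) + 1) (by omega) (by omega) (by omega) (by omega)]
  push_cast; rfl

lemma rev_mem_span (hB : IsPeriodOne N b) {v : Fin N → ℚ}
    (hv : v ∈ Submodule.span ℚ (Set.range (ratRows N b))) :
    (fun i => v i.rev) ∈ Submodule.span ℚ (Set.range (ratRows N b)) := by
  refine Submodule.apply_mem_span_of_forall_apply_mem_span (LinearMap.funLeft ℚ ℚ Fin.rev) ?_ hv
  rintro _ ⟨j, rfl⟩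
  show (fun i : Fin N => ratRows N b j i.rev) ∈ _
  rw [hB.ratRows_rev j]
  exact Submodule.neg_mem _ (Submodule.subset_span ⟨j.rev, rfl⟩)

lemma shiftRight_ratRows_of_lt (hB : IsPeriodOne N b) (j : Fin N) (hj : (j : ℕ) + 1 < N) :
    Fin.shiftRightLinear ℚ N (ratRows N b j) + (b (j + 1) N : ℚ) • shiftDefect N b =
      ratRows N b ⟨j + 1, hj⟩ + ((max (-b 1 (j + 2)) 0 : ℤ) : ℚ) • ratRows N b ⟨0, by omega⟩ := by
  funext i
  have hi := i.isLt
  simp only [Fin.shiftRightLinear, ratRows, shiftDefect, LinearMap.coe_mk, AddHom.coe_mk,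
    Pi.add_apply, Pi.smul_apply, smul_eq_mul, hB.lastCol (j + 1) (by omega) (by omega)]
  split_ifs with hpos hzero hzero
  · omega
  · rw [show (i : ℕ) - 1 + 1 = i by omega,
      hB.diag (j + 1) i (by omega) (by omega) (by omega) (by omega), shiftCorrection]
    push_cast; ring
  · simp only [hzero, zero_add]
    rw [hB.skew (j + 1 + 1) 1 (by omega) (by omega) le_rfl (by omega)]
    have h11 := hB.skew 1 1 le_rfl (by omega) le_rfl (by omega)
    rw [show b 1 1 = 0 by omega]
    push_cast; ring
  · omega

lemma shiftRight_ratRows_last (hB : IsPeriodOne N b) (hN : 0 < N) :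
    Fin.shiftRightLinear ℚ N (ratRows N b ⟨N - 1, by omega⟩) + (b N N : ℚ) • shiftDefect N b =
      -ratRows N b ⟨0, hN⟩ := by
  have hNN := hB.skew N N (by omega) le_rfl (by omega) le_rfl
  rw [show b N N = 0 by omega]
  funext i
  have hi := i.isLt
  simp only [Fin.shiftRightLinear, ratRows, LinearMap.coe_mk, AddHom.coe_mk,
    Pi.add_apply, Pi.neg_apply, Int.cast_zero, zero_smul, Pi.zero_apply, add_zero]
  split_ifs with hpos
  · rw [show N - 1 + 1 = N by omega, show (i : ℕ) - 1 + 1 = i by omega,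
      hB.skew N i (by omega) le_rfl (by omega) (by omega), hB.lastCol i (by omega) (by omega)]
    push_cast; rfl
  · have h11 := hB.skew 1 1 le_rfl (by omega) le_rfl (by omega)
    rw [show (i : ℕ) = 0 by omega, show b 1 1 = 0 by omega]
    simp

lemma shiftRight_add_smul_mem_span (hB : IsPeriodOne N b) (hN : 0 < N) {v : Fin N → ℚ}
    (hv : v ∈ Submodule.span ℚ (Set.range (ratRows N b))) :
    Fin.shiftRightLinear ℚ N v + v ⟨N - 1, by omega⟩ • shiftDefect N b ∈
      Submodule.span ℚ (Set.range (ratRows N b)) := by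
  refine Submodule.apply_mem_span_of_forall_apply_mem_span (Fin.shiftRightLinear ℚ N +
    (LinearMap.proj ⟨N - 1, by omega⟩).smulRight (shiftDefect N b)) ?_ hv
  rintro _ ⟨j, rfl⟩
  show Fin.shiftRightLinear ℚ N (ratRows N b j) + (b (j + 1) (N - 1 + 1) : ℚ) • shiftDefect N b ∈ _
  rw [show N - 1 + 1 = N by omega]
  rcases Nat.lt_or_ge ((j : ℕ) + 1) N with hj | hj
  · rw [hB.shiftRight_ratRows_of_lt j hj]
    exact add_mem (Submodule.subset_span ⟨_, rfl⟩)
      (Submodule.smul_mem _ _ (Submodule.subset_span ⟨_, rfl⟩))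
  · obtain ⟨j, hjN⟩ := j
    obtain rfl : j = N - 1 := by simp at hj; omega
    rw [show N - 1 + 1 = N by omega, hB.shiftRight_ratRows_last hN]
    exact Submodule.neg_mem _ (Submodule.subset_span ⟨_, rfl⟩)

end IsPeriodOne

/-- For a skew-symmetric integer matrix satisfying the Fordy–Marsh period-1 conditions,
the row span `im B ⊆ ℚ^N` is invariant under the reversal map `r(v)_j = v_{N-j+1}`, and
under the shift map `s` (prepending a zero) whenever the last entry of `v` vanishes.
Entries of `b` are indexed with `1 ≤ j, k ≤ N`; vectors in `ℚ^N` are indexed by `Fin N`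
(so index `i : Fin N` corresponds to the `(i+1)`-st coordinate). -/
theorem period1_rowspan_reversal_and_shift
    (N : ℕ) (hN : 2 ≤ N) (b : ℕ → ℕ → ℤ)
    (hskew : ∀ j k, 1 ≤ j → j ≤ N → 1 ≤ k → k ≤ N → b j k = - b k j)
    (h1 : ∀ j, 1 ≤ j → j ≤ N - 1 → b j N = b 1 (j + 1))
    (h2 : ∀ j k, 1 ≤ j → j ≤ N - 1 → 1 ≤ k → k ≤ N - 1 →
      b (j + 1) (k + 1) = b j k + b 1 (j + 1) * max (-(b 1 (k + 1))) 0
        - b 1 (k + 1) * max (-(b 1 (j + 1))) 0)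
    (rows : Fin N → Fin N → ℚ)
    (hrows : ∀ j k : Fin N, rows j k = (b ((j : ℕ) + 1) ((k : ℕ) + 1) : ℚ))
    (imB : Submodule ℚ (Fin N → ℚ))
    (himB : imB = Submodule.span ℚ (Set.range rows)) :
    (∀ v : Fin N → ℚ, v ∈ imB → (fun i : Fin N => v i.rev) ∈ imB) ∧
    (∀ v : Fin N → ℚ, v ∈ imB → v ⟨N - 1, by omega⟩ = 0 →
      (fun i : Fin N =>
        if 0 < (i : ℕ) then
          v ⟨(i : ℕ) - 1, Nat.lt_of_le_of_lt (Nat.sub_le _ _) i.isLt⟩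
        else 0) ∈ imB) := by
  have hB : IsPeriodOne N b := ⟨hskew, h1, fun j k hj hjN hk hkN =>
    (h2 j k hj hjN hk hkN).trans (add_sub_assoc _ _ _)⟩
  obtain rfl : rows = ratRows N b := funext₂ hrows
  subst himB
  refine ⟨fun v hv => hB.rev_mem_span hv, fun v hv hlast => ?_⟩
  have hshift := hB.shiftRight_add_smul_mem_span (by omega) hv
  rwa [hlast, zero_smul, add_zero] at hshift
end

section
/- Let N ≥ 2 and let a₁, …, a_{N−1} be integers forming a palindromic tuple, a_j = a_{N−j} for 1 ≤ j ≤ N−1. Let x : ℕ → ℝ be a sequence with x_n > 0 for all n satisfying the coefficient-free T-system x_{n+N} · x_n = ∏_{j=1}^{N−1} x_{n+j}^{[a_j]₊} + ∏_{j=1}^{N−1} x_{n+j}^{[−a_j]₊} for all n ∈ ℕ, where [b]₊ := max(b,0). Then the sequence ȳ_n := ∏_{j=1}^{N−1} x_{n+j}^{−a_j} satisfies the Y-system ȳ_{n+N} · ȳ_n = ∏_{j=1}^{N−1} (1 + ȳ_{n+j})^{[−a_j]₊} / ∏_{j=1}^{N−1} (1 + ȳ_{n+j}^{−1})^{[a_j]₊}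 for all n ∈ ℕ. -/
/-!
Write `M_e x` for the sequence `n ↦ ∏_{j ∈ S} x_{n+j}^{e_j}`. For a second exponent vector `f`,
the sequences `M_f (M_e x)` and `M_e (M_f x)` agree, both being `∏_{j,k} x_{n+j+k}^{e_k f_j}`.
With `T_n = x_{n+N} x_n = M_e x_n + M_f x_n` and `y = M_f x / M_e x` one has
`1 + y = T / M_e x` and `1 + y⁻¹ = T / M_f x`, so the right-hand side of the Y-system is
`(M_f T / M_f (M_e x)) / (M_e T / M_e (M_f x)) = M_{f-e} T`, which is `y_{n+N} y_n`.
Take `e = [a]₊`, `f = [-a]₊`.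
-/

open Finset

section DivisionCommMonoid

variable {α : Type*} [DivisionCommMonoid α] (S : Finset ℕ)

def shiftMonomial (e : ℕ → ℤ) (x : ℕ → α) (n : ℕ) : α :=
  ∏ j ∈ S, x (n + j) ^ e j

theorem shiftMonomial_mul (e : ℕ → ℤ) (u v : ℕ → α) :
    shiftMonomial S e (u * v) = shiftMonomial S e u * shiftMonomial S e v := by
  funext n
  simp only [shiftMonomial, Pi.mul_apply, mul_zpow, prod_mul_distrib]

theorem shiftMonomial_div (e : ℕ → ℤ) (u v : ℕ → α) :
    shiftMonomial S e (u / v) = shiftMonomial S e u / shiftMonomial S e v := by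
  funext n
  simp only [shiftMonomial, Pi.div_apply, div_zpow, prod_div_distrib]

theorem shiftMonomial_comp_add_right (e : ℕ → ℤ) (x : ℕ → α) (N n : ℕ) :
    shiftMonomial S e (fun m => x (m + N)) n = shiftMonomial S e x (n + N) := by
  simp only [shiftMonomial, add_right_comm]

theorem shiftMonomial_comm (e f : ℕ → ℤ) (x : ℕ → α) :
    shiftMonomial S f (shiftMonomial S e x) = shiftMonomial S e (shiftMonomial S f x) := by
  have expand : ∀ (e f : ℕ → ℤ) (n : ℕ), shiftMonomial S f (shiftMonomial S e x) n =
      ∏ j ∈ S, ∏ k ∈ S, x (n + j + k) ^ (e k * f j) := fun e f n => by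
    simp only [shiftMonomial, ← prod_zpow, zpow_mul]
  funext n
  rw [expand, expand, prod_comm]
  refine prod_congr rfl fun j _ => prod_congr rfl fun k _ => ?_
  rw [add_right_comm, mul_comm]

end DivisionCommMonoid

section Field

variable {K : Type*} [Field K] (S : Finset ℕ) {x : ℕ → K}

theorem shiftMonomial_ne_zero (hx : ∀ n, x n ≠ 0) (e : ℕ → ℤ) (n : ℕ) :
    shiftMonomial S e x n ≠ 0 :=
  prod_ne_zero_iff.mpr fun _ _ => zpow_ne_zero _ (hx _)

theorem shiftMonomial_sub (hx : ∀ n, x n ≠ 0) (e f : ℕ → ℤ) :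
    shiftMonomial S (f - e) x = shiftMonomial S f x / shiftMonomial S e x := by
  funext n
  simp only [shiftMonomial, Pi.div_apply, Pi.sub_apply, zpow_sub₀ (hx _), prod_div_distrib]

theorem shiftMonomial_sub_solves_Ysystem (hx : ∀ n, x n ≠ 0) (N : ℕ) (e f : ℕ → ℤ)
    (hT : ∀ n, x (n + N) * x n = shiftMonomial S e x n + shiftMonomial S f x n) (n : ℕ) :
    let y := shiftMonomial S (f - e) x
    y (n + N) * y n =
      shiftMonomial S f (fun m => 1 + y m) n / shiftMonomial S e (fun m => 1 + (y m)⁻¹) n := by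
  intro y
  let T : ℕ → K := (fun m => x (m + N)) * x
  have hy : y = shiftMonomial S f x / shiftMonomial S e x := shiftMonomial_sub S hx e f
  have hMe := shiftMonomial_ne_zero S hx e
  have hMf := shiftMonomial_ne_zero S hx f
  have one_add_y : (fun m => 1 + y m) = T / shiftMonomial S e x := by
    funext m
    rw [hy, Pi.div_apply, Pi.div_apply, one_add_div (hMe m), ← hT]
    rfl
  have one_add_inv_y : (fun m => 1 + (y m)⁻¹) = T / shiftMonomial S f x := by
    funext m
    rw [hy, Pi.div_apply, Pi.div_apply, inv_div, one_add_div (hMf m), add_comm, ← hT]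
    rfl
  have hT_ne : ∀ m, T m ≠ 0 := fun m => mul_ne_zero (hx _) (hx _)
  rw [one_add_y, one_add_inv_y, shiftMonomial_div, shiftMonomial_div, shiftMonomial_comm,
    Pi.div_apply, Pi.div_apply, div_div_div_cancel_right₀ (shiftMonomial_ne_zero S hMf e n),
    ← Pi.div_apply, ← shiftMonomial_sub S hT_ne, shiftMonomial_mul,
    Pi.mul_apply, shiftMonomial_comp_add_right]

end Field

theorem Tsystem_solves_Ysystem_general
    (N : ℕ) (a : ℕ → ℤ)
    (x : ℕ → ℝ) (hx : ∀ n, 0 < x n)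
    (hT : ∀ n : ℕ, x (n + N) * x n =
      (∏ j ∈ Finset.Icc 1 (N - 1), x (n + j) ^ (max (a j) 0)) +
      (∏ j ∈ Finset.Icc 1 (N - 1), x (n + j) ^ (max (-(a j)) 0)))
    (y : ℕ → ℝ)
    (hy : ∀ n, y n = ∏ j ∈ Finset.Icc 1 (N - 1), x (n + j) ^ (-(a j))) :
    ∀ n : ℕ, y (n + N) * y n =
      (∏ j ∈ Finset.Icc 1 (N - 1), (1 + y (n + j)) ^ (max (-(a j)) 0)) /
      (∏ j ∈ Finset.Icc 1 (N - 1), (1 + (y (n + j))⁻¹) ^ (max (a j) 0)) := by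
  have hy_eq : y = shiftMonomial (Icc 1 (N - 1))
      ((fun j => max (-(a j)) 0) - fun j => max (a j) 0) x := by
    funext n
    rw [hy]
    refine prod_congr rfl fun j _ => ?_
    rw [Pi.sub_apply]
    congr 1
    omega
  subst hy_eq
  exact shiftMonomial_sub_solves_Ysystem _ (fun n => (hx n).ne') N _ _ hT

/-- For a period-1 quiver with palindromic exponent tuple `(a_1, …, a_{N-1})`, a positive
solution of the coefficient-free T-system yields, via `ȳ_n = ∏_j x_{n+j}^{-a_j}`, a
solution of the associated Y-system. Here `[b]₊ = max b 0` and all powers are `zpow`. -/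
theorem Tsystem_solves_Ysystem
    (N : ℕ) (hN : 2 ≤ N) (a : ℕ → ℤ)
    (hpal : ∀ j, 1 ≤ j → j ≤ N - 1 → a j = a (N - j))
    (x : ℕ → ℝ) (hx : ∀ n, 0 < x n)
    (hT : ∀ n : ℕ, x (n + N) * x n =
      (∏ j ∈ Finset.Icc 1 (N - 1), x (n + j) ^ (max (a j) 0)) +
      (∏ j ∈ Finset.Icc 1 (N - 1), x (n + j) ^ (max (-(a j)) 0)))
    (y : ℕ → ℝ)
    (hy : ∀ n, y n = ∏ j ∈ Finset.Icc 1 (N - 1), x (n + j) ^ (-(a j))) :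
    ∀ n : ℕ, y (n + N) * y n =
      (∏ j ∈ Finset.Icc 1 (N - 1), (1 + y (n + j)) ^ (max (-(a j)) 0)) /
      (∏ j ∈ Finset.Icc 1 (N - 1), (1 + (y (n + j))⁻¹) ^ (max (a j) 0)) :=
  Tsystem_solves_Ysystem_general N a x hx hT y hy
end

section
/- Let N ≥ 4 and let 𝒵 : ℕ → ℝ be a sequence with 𝒵_n > 0 for all n. Then 𝒵 satisfies the Z-system 𝒵_{n+N−2} · 𝒵_n = 𝒵_{n+N−3} · 𝒵_{n+1} for all n ∈ ℕ if and only if there exist a constant 𝔮 > 0 and a sequence β : ℕ → ℝ with β_n > 0 and β_{n+N−3} = β_n for all n, such that 𝒵_n = β_n · 𝔮^n for all n ∈ ℕ. -/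
/-!
The Z-system says that the ratio `𝒵_{n+k} / 𝒵_n`, with `k = N - 3`, does not depend on `n`.
Calling this constant `𝔮^k` for its positive real `k`-th root `𝔮`, the sequence `𝒵_n / 𝔮^n`
is `k`-periodic. Conversely, for `𝒵_n = β_n 𝔮^n` with `β` `k`-periodic, both sides of the
Z-system equal `β_n β_{n+1} 𝔮^{2n+k+1}`.
-/

/-- The paper's Z-system is the case `k = N - 3`. -/
def SatisfiesZSystem {M : Type*} [Mul M] (k : ℕ) (z : ℕ → M) : Prop :=
  ∀ n, z (n + (k + 1)) * z n = z (n + k) * z (n + 1)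

theorem satisfiesZSystem_of_eq_mul_pow {M : Type*} [CommMonoid M] {k : ℕ} {β z : ℕ → M}
    {q : M} (hβ : Function.Periodic β k) (hz : ∀ n, z n = β n * q ^ n) :
    SatisfiesZSystem k z := by
  intro n
  have hβ' : β (n + (k + 1)) = β (n + 1) := by
    rw [← add_assoc, add_right_comm, hβ]
  simp only [hz, hβ', hβ n, pow_add]
  ac_rfl

theorem SatisfiesZSystem.shift_eq_mul {K : Type*} [Field K] {k : ℕ} {z : ℕ → K}
    (hz : SatisfiesZSystem k z) (hne : ∀ n, z n ≠ 0) (n : ℕ) :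
    z (n + k) = z k / z 0 * z n := by
  induction n with
  | zero => rw [zero_add, div_mul_cancel₀ _ (hne 0)]
  | succ n ih =>
    apply mul_right_cancel₀ (hne n)
    calc z (n + 1 + k) * z n = z (n + k) * z (n + 1) := by
          rw [add_right_comm, add_assoc, hz n]
      _ = z k / z 0 * z (n + 1) * z n := by rw [ih]; ring

theorem periodic_div_pow_of_shift_eq {K : Type*} [Field K] {k : ℕ} {z : ℕ → K} {q : K}
    (hq : q ≠ 0) (hz : ∀ n, z (n + k) = q ^ k * z n) :
    Function.Periodic (fun n => z n / q ^ n) k := by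
  intro n
  simp only [hz, pow_add]
  field_simp

theorem SatisfiesZSystem.exists_eq_periodic_mul_pow {k : ℕ} (hk : k ≠ 0) {z : ℕ → ℝ}
    (hz : SatisfiesZSystem k z) (hpos : ∀ n, 0 < z n) :
    ∃ q : ℝ, 0 < q ∧ ∃ β : ℕ → ℝ, (∀ n, 0 < β n) ∧
      Function.Periodic β k ∧ ∀ n, z n = β n * q ^ n := by
  have hP : 0 < z k / z 0 := div_pos (hpos k) (hpos 0)
  set q := (z k / z 0) ^ (k⁻¹ : ℝ)
  have hq : 0 < q := Real.rpow_pos_of_pos hP _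
  have hqk : q ^ k = z k / z 0 := Real.rpow_inv_natCast_pow hP.le hk
  refine ⟨q, hq, fun n => z n / q ^ n, fun n => div_pos (hpos n) (pow_pos hq n), ?_, fun n => ?_⟩
  · refine periodic_div_pow_of_shift_eq hq.ne' fun n => ?_
    rw [hqk, hz.shift_eq_mul fun m => (hpos m).ne']
  · rw [div_mul_cancel₀ _ (pow_pos hq n).ne']

/-- A positive sequence `𝒵` satisfies the Z-system
`𝒵_{n+N-2} 𝒵_n = 𝒵_{n+N-3} 𝒵_{n+1}` if and only if `𝒵_n = β_n 𝔮^n` for some constant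
`𝔮 > 0` and some positive sequence `β` that is periodic with period `N - 3`. -/
theorem Zsystem_solution_characterization
    (N : ℕ) (hN : 4 ≤ N) (𝒵 : ℕ → ℝ) (h𝒵 : ∀ n, 0 < 𝒵 n) :
    (∀ n : ℕ, 𝒵 (n + (N - 2)) * 𝒵 n = 𝒵 (n + (N - 3)) * 𝒵 (n + 1)) ↔
    (∃ 𝔮 : ℝ, 0 < 𝔮 ∧ ∃ β : ℕ → ℝ, (∀ n, 0 < β n) ∧
      (∀ n : ℕ, β (n + (N - 3)) = β n) ∧ (∀ n : ℕ, 𝒵 n = β n * 𝔮 ^ n)) := by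
  rw [show N - 2 = N - 3 + 1 by omega]
  exact ⟨fun h => SatisfiesZSystem.exists_eq_periodic_mul_pow (by omega) h h𝒵,
    fun ⟨_, _, _, _, hβ, h𝒵eq⟩ => satisfiesZSystem_of_eq_mul_pow hβ h𝒵eq⟩
end

section
/- Let x : ℕ → ℝ and 𝒵 : ℕ → ℝ be sequences with x_n > 0 and 𝒵_n > 0 for all n, satisfying the Somos-5 T_z-system x_{n+5} · x_n = 𝒵_n · (x_{n+4} · x_{n+1} + x_{n+3} · x_{n+2}) for all n ∈ ℕ. Then the quantities U_n := x_{n+3} · x_n / (x_{n+2} · x_{n+1}) satisfy the U_z-system U_{n+2} · U_n = 𝒵_n · (1 + U_{n+1}^{−1}) for all n ∈ ℕ (a version of q-Painlevé II when 𝒵_n = β_n 𝔮^n with β of period 2). -/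
/-!
Writing `U_n = (x_{n+3}/x_{n+2}) · (x_n/x_{n+1})`, the product `U_{n+2} U_n` telescopes to
`x_{n+5} x_n / (x_{n+4} x_{n+1})`, while `1 + U_{n+1}⁻¹ = (x_{n+4} x_{n+1} + x_{n+3} x_{n+2}) /
(x_{n+4} x_{n+1})`; the T_z-system says exactly that the two numerators differ by the factor `𝒵_n`.
-/

section Somos5

variable {K : Type*} [Field K] {x₀ x₁ x₂ x₃ x₄ x₅ : K}

theorem somos5_U_shift_mul (h₂ : x₂ ≠ 0) (h₃ : x₃ ≠ 0) :
    x₅ * x₂ / (x₄ * x₃) * (x₃ * x₀ / (x₂ * x₁)) = x₅ * x₀ / (x₄ * x₁) := by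
  field_simp

theorem one_add_inv_somos5_U (h₁ : x₁ ≠ 0) (h₄ : x₄ ≠ 0) :
    1 + (x₄ * x₁ / (x₃ * x₂))⁻¹ = (x₄ * x₁ + x₃ * x₂) / (x₄ * x₁) := by
  rw [inv_div, one_add_div (mul_ne_zero h₄ h₁)]

end Somos5

theorem somos5_Tz_to_Uz_general
    (x 𝒵 : ℕ → ℝ) (hx : ∀ n, 0 < x n)
    (hT : ∀ n : ℕ, x (n + 5) * x n = 𝒵 n * (x (n + 4) * x (n + 1) + x (n + 3) * x (n + 2)))
    (U : ℕ → ℝ) (hU : ∀ n, U n = x (n + 3) * x n / (x (n + 2) * x (n + 1))) :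
    ∀ n : ℕ, U (n + 2) * U n = 𝒵 n * (1 + (U (n + 1))⁻¹) := by
  intro n
  have hx_ne : ∀ k, x k ≠ 0 := fun k => (hx k).ne'
  rw [hU, hU, hU, one_add_inv_somos5_U (hx_ne _) (hx_ne _)]
  calc _ = x (n + 5) * x n / (x (n + 4) * x (n + 1)) := somos5_U_shift_mul (hx_ne _) (hx_ne _)
    _ = _ := by rw [hT n, mul_div_assoc]

/-- For positive solutions of the Somos-5 T_z-system
`x_{n+5} x_n = 𝒵_n (x_{n+4} x_{n+1} + x_{n+3} x_{n+2})`, the quantities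
`U_n = x_{n+3} x_n/(x_{n+2} x_{n+1})` satisfy the U_z-system
`U_{n+2} U_n = 𝒵_n (1 + U_{n+1}⁻¹)` (a version of q-Painlevé II). -/
theorem somos5_Tz_to_Uz
    (x 𝒵 : ℕ → ℝ) (hx : ∀ n, 0 < x n) (h𝒵 : ∀ n, 0 < 𝒵 n)
    (hT : ∀ n : ℕ, x (n + 5) * x n = 𝒵 n * (x (n + 4) * x (n + 1) + x (n + 3) * x (n + 2)))
    (U : ℕ → ℝ) (hU : ∀ n, U n = x (n + 3) * x n / (x (n + 2) * x (n + 1))) :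
    ∀ n : ℕ, U (n + 2) * U n = 𝒵 n * (1 + (U (n + 1))⁻¹) :=
  somos5_Tz_to_Uz_general x 𝒵 hx hT U hU
end

section
/- Let N ≥ 4 be even, and let x : ℕ → ℝ and 𝒵 : ℕ → ℝ be sequences with x_n > 0 and 𝒵_n > 0 for all n, satisfying x_{n+N} · x_n = 𝒵_n · (x_{n+N−1} · x_{n+1} + x_{n+N−2} · x_{n+2}) for all n ∈ ℕ. Then the quantities U_n := x_n · x_{n+2} / x_{n+1}^2 satisfy the U_z-system U_{n+N−2} · ( ∏_{j=1}^{N−3} U_{n+j} )² · U_n = 𝒵_n · ( 1 + ∏_{k=1}^{N−3} U_{n+k} ) for all n ∈ ℕ. -/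
/-! With `r k = x (k + 1) / x k` one has `U k = r (k + 1) / r k`, so every product of consecutive
`U`'s telescopes to a ratio of four `x`'s. After this, the `U_z`-relation at `n` is the `T_z`-relation
at `n` divided by `x (n + 2) * x (n + N - 2)`. -/

open Finset

section

variable {K : Type*} [Field K] (x U : ℕ → K) (hx : ∀ k, x k ≠ 0)
  (hU : ∀ k, U k = x k * x (k + 2) / x (k + 1) ^ 2)
include hx hU

theorem prod_Icc_eq_of_eq_mul_div_sq (n m : ℕ) :
    ∏ j ∈ Icc 1 m, U (n + j) = x (n + 1) * x (n + m + 2) / (x (n + 2) * x (n + m + 1)) := by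
  induction m with
  | zero =>
    rw [Icc_eq_empty (by omega), prod_empty, add_zero, mul_comm (x (n + 2)), div_self]
    exact mul_ne_zero (hx _) (hx _)
  | succ m ih =>
    rw [prod_Icc_succ_top (by omega), ih, hU]
    have := hx (n + 2); have := hx (n + m + 1); have := hx (n + m + 2)
    simp only [add_assoc, Nat.reduceAdd] at *
    field_simp

theorem Uz_relation_of_Tz_relation (z : K) (n m : ℕ)
    (hT : x (n + m + 3) * x n = z * (x (n + m + 2) * x (n + 1) + x (n + m + 1) * x (n + 2))) :
    U (n + (m + 1)) * (∏ j ∈ Icc 1 m, U (n + j)) ^ 2 * U n =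
      z * (1 + ∏ k ∈ Icc 1 m, U (n + k)) := by
  rw [prod_Icc_eq_of_eq_mul_div_sq x U hx hU, hU, hU]
  have := hx n; have := hx (n + 1); have := hx (n + 2)
  have := hx (n + m + 1); have := hx (n + m + 2)
  simp only [add_assoc, Nat.reduceAdd] at *
  field_simp
  linear_combination hT

end

theorem somosN_even_Tz_to_Uz_general
    (N : ℕ) (hN : 4 ≤ N)
    (x 𝒵 : ℕ → ℝ) (hx : ∀ n, 0 < x n)
    (hT : ∀ n : ℕ, x (n + N) * x n =
      𝒵 n * (x (n + (N - 1)) * x (n + 1) + x (n + (N - 2)) * x (n + 2)))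
    (U : ℕ → ℝ) (hU : ∀ n, U n = x n * x (n + 2) / (x (n + 1)) ^ 2) :
    ∀ n : ℕ, U (n + (N - 2)) * (∏ j ∈ Finset.Icc 1 (N - 3), U (n + j)) ^ 2 * U n =
      𝒵 n * (1 + ∏ k ∈ Finset.Icc 1 (N - 3), U (n + k)) := by
  intro n
  obtain ⟨m, rfl⟩ : ∃ m, N = m + 3 := ⟨N - 3, by omega⟩
  have hT' := hT n
  simp only [← add_assoc, show m + 3 - 1 = m + 2 by omega, show m + 3 - 2 = m + 1 by omega] at hT'
  simpa only [show m + 3 - 2 = m + 1 by omega, Nat.add_sub_cancel] using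
    Uz_relation_of_Tz_relation x U (fun k ↦ (hx k).ne') hU (𝒵 n) n m hT'

/-- For even `N ≥ 4` and positive solutions of the Somos-type T_z-system
`x_{n+N} x_n = 𝒵_n (x_{n+N-1} x_{n+1} + x_{n+N-2} x_{n+2})`, the quantities
`U_n = x_n x_{n+2}/x_{n+1}²` satisfy the U_z-system
`U_{n+N-2} (∏_{j=1}^{N-3} U_{n+j})² U_n = 𝒵_n (1 + ∏_{k=1}^{N-3} U_{n+k})`. -/
theorem somosN_even_Tz_to_Uz
    (N : ℕ) (hN : 4 ≤ N) (hNeven : Even N)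
    (x 𝒵 : ℕ → ℝ) (hx : ∀ n, 0 < x n) (h𝒵 : ∀ n, 0 < 𝒵 n)
    (hT : ∀ n : ℕ, x (n + N) * x n =
      𝒵 n * (x (n + (N - 1)) * x (n + 1) + x (n + (N - 2)) * x (n + 2)))
    (U : ℕ → ℝ) (hU : ∀ n, U n = x n * x (n + 2) / (x (n + 1)) ^ 2) :
    ∀ n : ℕ, U (n + (N - 2)) * (∏ j ∈ Finset.Icc 1 (N - 3), U (n + j)) ^ 2 * U n =
      𝒵 n * (1 + ∏ k ∈ Finset.Icc 1 (N - 3), U (n + k)) :=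
  somosN_even_Tz_to_Uz_general N hN x 𝒵 hx hT U hU
end

section
/- Let N ≥ 5 be odd, and let x : ℕ → ℝ and 𝒵 : ℕ → ℝ be sequences with x_n > 0 and 𝒵_n > 0 for all n, satisfying x_{n+N} · x_n = 𝒵_n · (x_{n+N−1} · x_{n+1} + x_{n+N−2} · x_{n+2}) for all n ∈ ℕ. Then the quantities U_n := x_n · x_{n+3} / (x_{n+1} · x_{n+2}) satisfy the U_z-system ∏_{j=0}^{N−3} U_{n+j} = 𝒵_n · ( 1 + ∏_{k=0}^{(N−5)/2} U_{n+2k+1} ) for all n ∈ ℕ. -/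
/-! `U_n = w_{n+1} / w_n` with `w_n = x_{n+2} / x_n`, and likewise `U_{n+2k+1} = v_{k+1} / v_k` with
`v_k = x_{n+2k+2} / x_{n+2k+1}`. Both products in the U_z-system therefore telescope, and for
`N = 2m + 5` the identity reduces to the T_z-system relation at `n` divided by
`x_{n+2} x_{n+N-2}`. -/

open Finset

theorem Finset.prod_range_div_of_ne_zero {G₀ : Type*} [CommGroupWithZero G₀] (f : ℕ → G₀)
    (hf : ∀ i, f i ≠ 0) (n : ℕ) : ∏ i ∈ range n, f (i + 1) / f i = f n / f 0 := by
  simpa using congrArg Units.val (prod_range_div (fun i ↦ Units.mk0 (f i) (hf i)) n)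

section SomosRatio

variable {K : Type*} [Field K]

def somosRatio (x : ℕ → K) (n : ℕ) : K := x n * x (n + 3) / (x (n + 1) * x (n + 2))

theorem somosRatio_eq_div_div (x : ℕ → K) (n : ℕ) :
    somosRatio x n = x (n + 3) / x (n + 1) / (x (n + 2) / x n) := by
  simp only [somosRatio, div_eq_mul_inv, mul_inv, inv_inv]
  ring

variable {x : ℕ → K} (hx : ∀ n, x n ≠ 0)
include hx

theorem prod_range_somosRatio (n M : ℕ) :
    ∏ j ∈ range M, somosRatio x (n + j) = x n * x (n + M + 2) / (x (n + 2) * x (n + M)) := by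
  set w : ℕ → K := fun j ↦ x (n + j + 2) / x (n + j)
  calc ∏ j ∈ range M, somosRatio x (n + j) = ∏ j ∈ range M, w (j + 1) / w j :=
        prod_congr rfl fun j _ ↦ by simp only [somosRatio_eq_div_div, w]; ring_nf
    _ = w M / w 0 := prod_range_div_of_ne_zero w (fun j ↦ div_ne_zero (hx _) (hx _)) M
    _ = x n * x (n + M + 2) / (x (n + 2) * x (n + M)) := by
        simp only [w, add_zero, div_div_div_eq]; ring

theorem prod_range_somosRatio_odd (n m : ℕ) :
    ∏ k ∈ range m, somosRatio x (n + 2 * k + 1) =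
      x (n + 1) * x (n + 2 * m + 2) / (x (n + 2) * x (n + 2 * m + 1)) := by
  set v : ℕ → K := fun k ↦ x (n + 2 * k + 2) / x (n + 2 * k + 1)
  calc ∏ k ∈ range m, somosRatio x (n + 2 * k + 1) = ∏ k ∈ range m, v (k + 1) / v k :=
        prod_congr rfl fun k _ ↦ by simp only [somosRatio_eq_div_div, v]; ring_nf
    _ = v m / v 0 := prod_range_div_of_ne_zero v (fun k ↦ div_ne_zero (hx _) (hx _)) m
    _ = x (n + 1) * x (n + 2 * m + 2) / (x (n + 2) * x (n + 2 * m + 1)) := by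
        simp only [v, mul_zero, add_zero, div_div_div_eq]; ring

theorem prod_range_somosRatio_eq_of_somos (z : K) (n m : ℕ)
    (hT : x (n + (2 * m + 5)) * x n =
      z * (x (n + (2 * m + 4)) * x (n + 1) + x (n + (2 * m + 3)) * x (n + 2))) :
    ∏ j ∈ range (2 * m + 3), somosRatio x (n + j) =
      z * (1 + ∏ k ∈ range (m + 1), somosRatio x (n + 2 * k + 1)) := by
  rw [prod_range_somosRatio hx, prod_range_somosRatio_odd hx]
  have h₂ := hx (n + 2)
  have h₃ := hx (n + (2 * m + 3))
  rw [show n + (2 * m + 3) + 2 = n + (2 * m + 5) by ring,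
    show n + 2 * (m + 1) + 2 = n + (2 * m + 4) by ring,
    show n + 2 * (m + 1) + 1 = n + (2 * m + 3) by ring]
  field_simp
  linear_combination hT

end SomosRatio

theorem somosN_odd_Tz_to_Uz_general
    (N : ℕ) (hN : 5 ≤ N) (hNodd : Odd N)
    (x 𝒵 : ℕ → ℝ) (hx : ∀ n, 0 < x n)
    (hT : ∀ n : ℕ, x (n + N) * x n =
      𝒵 n * (x (n + (N - 1)) * x (n + 1) + x (n + (N - 2)) * x (n + 2)))
    (U : ℕ → ℝ) (hU : ∀ n, U n = x n * x (n + 3) / (x (n + 1) * x (n + 2))) :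
    ∀ n : ℕ, (∏ j ∈ Finset.range (N - 2), U (n + j)) =
      𝒵 n * (1 + ∏ k ∈ Finset.range ((N - 5) / 2 + 1), U (n + 2 * k + 1)) := by
  obtain ⟨m, rfl⟩ : ∃ m, N = 2 * m + 5 := by
    obtain ⟨k, hk⟩ := hNodd
    exact ⟨k - 2, by omega⟩
  obtain rfl : U = somosRatio x := funext hU
  intro n
  have hTn := hT n
  rw [show 2 * m + 5 - 1 = 2 * m + 4 by omega, show 2 * m + 5 - 2 = 2 * m + 3 by omega] at hTn
  rw [show 2 * m + 5 - 2 = 2 * m + 3 by omega, show (2 * m + 5 - 5) / 2 + 1 = m + 1 by omega]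
  exact prod_range_somosRatio_eq_of_somos (fun n ↦ (hx n).ne') (𝒵 n) n m hTn

/-- For odd `N ≥ 5` and positive solutions of the Somos-type T_z-system
`x_{n+N} x_n = 𝒵_n (x_{n+N-1} x_{n+1} + x_{n+N-2} x_{n+2})`, the quantities
`U_n = x_n x_{n+3}/(x_{n+1} x_{n+2})` satisfy the U_z-system
`∏_{j=0}^{N-3} U_{n+j} = 𝒵_n (1 + ∏_{k=0}^{(N-5)/2} U_{n+2k+1})`. -/
theorem somosN_odd_Tz_to_Uz
    (N : ℕ) (hN : 5 ≤ N) (hNodd : Odd N)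
    (x 𝒵 : ℕ → ℝ) (hx : ∀ n, 0 < x n) (h𝒵 : ∀ n, 0 < 𝒵 n)
    (hT : ∀ n : ℕ, x (n + N) * x n =
      𝒵 n * (x (n + (N - 1)) * x (n + 1) + x (n + (N - 2)) * x (n + 2)))
    (U : ℕ → ℝ) (hU : ∀ n, U n = x n * x (n + 3) / (x (n + 1) * x (n + 2))) :
    ∀ n : ℕ, (∏ j ∈ Finset.range (N - 2), U (n + j)) =
      𝒵 n * (1 + ∏ k ∈ Finset.range ((N - 5) / 2 + 1), U (n + 2 * k + 1)) :=
  somosN_odd_Tz_to_Uz_general N hN hNodd x 𝒵 hx hT U hU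
end

section
/- Let x : ℕ → ℝ and 𝒵 : ℕ → ℝ be sequences with x_n > 0 and 𝒵_n > 0 for all n, satisfying the special Somos-7 T_z-system x_{n+7} · x_n = 𝒵_n · (x_{n+6} · x_{n+1} + x_{n+4} · x_{n+3}) for all n ∈ ℕ. Then the quantities U_n := x_{n+5} · x_n / (x_{n+3} · x_{n+2}) satisfy the Lyness-type U_z-system U_{n+2} · U_n = 𝒵_n · (U_{n+1} + 1) for all n ∈ ℕ. -/
/-! Multiplying `U_{n+2}` by `U_n` telescopes to `x_{n+7} x_n / (x_{n+4} x_{n+3})`, while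
`U_{n+1} + 1 = (x_{n+6} x_{n+1} + x_{n+4} x_{n+3}) / (x_{n+4} x_{n+3})`; so the U_z-system is
the T_z-system divided by `x_{n+4} x_{n+3}`. -/

section SymplecticCoord

variable {K : Type*} [Field K] (x : ℕ → K) (n : ℕ)

def symplecticCoord : K := x (n + 5) * x n / (x (n + 3) * x (n + 2))

theorem symplecticCoord_add_two_mul (hx₂ : x (n + 2) ≠ 0) (hx₅ : x (n + 5) ≠ 0) :
    symplecticCoord x (n + 2) * symplecticCoord x n =
      x (n + 7) * x n / (x (n + 4) * x (n + 3)) := by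
  simp only [symplecticCoord]
  field_simp

theorem symplecticCoord_succ_add_one (hx₃ : x (n + 3) ≠ 0) (hx₄ : x (n + 4) ≠ 0) :
    symplecticCoord x (n + 1) + 1 =
      (x (n + 6) * x (n + 1) + x (n + 4) * x (n + 3)) / (x (n + 4) * x (n + 3)) := by
  simp only [symplecticCoord]
  field_simp

end SymplecticCoord

theorem somos7_Tz_to_Uz_general
    (x 𝒵 : ℕ → ℝ) (hx : ∀ n, 0 < x n)
    (hT : ∀ n : ℕ, x (n + 7) * x n = 𝒵 n * (x (n + 6) * x (n + 1) + x (n + 4) * x (n + 3)))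
    (U : ℕ → ℝ) (hU : ∀ n, U n = x (n + 5) * x n / (x (n + 3) * x (n + 2))) :
    ∀ n : ℕ, U (n + 2) * U n = 𝒵 n * (U (n + 1) + 1) := by
  obtain rfl : U = symplecticCoord x := funext hU
  intro n
  have hx_ne (k : ℕ) : x k ≠ 0 := (hx k).ne'
  rw [symplecticCoord_add_two_mul x n (hx_ne _) (hx_ne _),
    symplecticCoord_succ_add_one x n (hx_ne _) (hx_ne _), hT, mul_div_assoc]

/-- For positive solutions of the special Somos-7 T_z-system
`x_{n+7} x_n = 𝒵_n (x_{n+6} x_{n+1} + x_{n+4} x_{n+3})`, the quantities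
`U_n = x_{n+5} x_n/(x_{n+3} x_{n+2})` satisfy the Lyness-type U_z-system
`U_{n+2} U_n = 𝒵_n (U_{n+1} + 1)`. -/
theorem somos7_Tz_to_Uz
    (x 𝒵 : ℕ → ℝ) (hx : ∀ n, 0 < x n) (h𝒵 : ∀ n, 0 < 𝒵 n)
    (hT : ∀ n : ℕ, x (n + 7) * x n = 𝒵 n * (x (n + 6) * x (n + 1) + x (n + 4) * x (n + 3)))
    (U : ℕ → ℝ) (hU : ∀ n, U n = x (n + 5) * x n / (x (n + 3) * x (n + 2))) :
    ∀ n : ℕ, U (n + 2) * U n = 𝒵 n * (U (n + 1) + 1) :=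
  somos7_Tz_to_Uz_general x 𝒵 hx hT U hU
end
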